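/- arXiv:2101.07506 — 5 statements merged into one kernel-verified Lean document; each statement's English description precedes it below -/
import Mathlib

section
/- Let f : D → G and α : G' → G be homomorphisms of abelian groups, with D divisible and the kernel of α finite. Suppose a group Γ acts on D, G, and G' by group automorphisms, and that f and α are Γ-equivariant. If f' : D → G' is a homomorphism with α ∘ f' = f, then f' is Γ-equivariant. -/
/-- Fact 1 (equivariance part): if a group `Γ` acts on `D`, `G`, `G'` by additive automorphisms,
`D` is divisible, `ker α` is finite, `f` and `α` are `Γ`-equivariant, and `f'` is a lift of `f`
along `α`, then `f'` is `Γ`-equivariant. -/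
theorem lift_is_equivariant {Γ D G G' : Type*} [Group Γ]
    [AddCommGroup D] [AddCommGroup G] [AddCommGroup G']
    [DistribMulAction Γ D] [DistribMulAction Γ G] [DistribMulAction Γ G']
    (f : D →+ G) (α : G' →+ G)
    (hD : ∀ (x : D) (n : ℤ), n ≠ 0 → ∃ y : D, n • y = x)
    (hker : Set.Finite {x : G' | α x = 0})
    (hf : ∀ (σ : Γ) (x : D), f (σ • x) = σ • f x)
    (hα : ∀ (σ : Γ) (x : G'), α (σ • x) = σ • α x)
    (f' : D →+ G') (h' : α.comp f' = f) :
    ∀ (σ : Γ) (x : D), f' (σ • x) = σ • f' x := by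
  intro σ x
  have hK : Finite α.ker := by
    have he : ((α.ker : Set G')) = {x | α x = 0} := by
      ext g; simp [AddMonoidHom.mem_ker]
    exact (he ▸ hker).to_subtype
  set n : ℕ := Nat.card α.ker with hn
  have hnpos : 0 < n := Nat.card_pos
  have hf'α : ∀ y : D, α (f' y) = f y := fun y => DFunLike.congr_fun h' y
  have hkey : ∀ y : D, α (f' (σ • y) - σ • f' y) = 0 := by
    intro y
    rw [map_sub, hf'α, hα, hf'α, hf, sub_self]
  have hsm : ∀ g : G', α g = 0 → n • g = 0 := by
    intro g hg
    have hmem : g ∈ α.ker := by simpa [AddMonoidHom.mem_ker] using hg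
    have h0 : n • (⟨g, hmem⟩ : α.ker) = 0 := card_nsmul_eq_zero' (x := (⟨g, hmem⟩ : α.ker))
    have := congrArg (AddSubgroup.subtype α.ker) h0
    simpa using this
  obtain ⟨y, hy⟩ := hD x (n : ℤ) (by exact_mod_cast hnpos.ne')
  have hx : f' (σ • x) - σ • f' x = n • (f' (σ • y) - σ • f' y) := by
    rw [← hy]
    rw [smul_comm σ ((n : ℤ)) y, map_zsmul, map_zsmul, smul_comm σ ((n : ℤ))]
    rw [smul_sub]
    norm_cast
  have : f' (σ • x) - σ • f' x = 0 := by rw [hx]; exact hsm _ (hkey y)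
  exact sub_eq_zero.mp this
end

section
/- Let 0 → H →ι D →π G → 0 be a short exact sequence of abelian groups with D ℓ-divisible, for a prime ℓ. Then the induced map T_ℓπ : T_ℓD → T_ℓG on ℓ-adic Tate modules is surjective if and only if H is ℓ-divisible. -/
/-- The `ℓ`-adic Tate module of an abelian group `M`, realized as the subgroup of sequences
`(x_n)` in `∏ M` with `ℓ^n • x_n = 0` and `ℓ • x_{n+1} = x_n`. -/
def tateSubgroup (ℓ : ℕ) (M : Type*) [AddCommGroup M] : AddSubgroup (ℕ → M) where
  carrier := {x | (∀ n, ℓ ^ n • x n = 0) ∧ ∀ n, ℓ • x (n + 1) = x n}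
  zero_mem' := ⟨fun _ => smul_zero _, fun _ => smul_zero _⟩
  add_mem' := by
    rintro x y ⟨hx1, hx2⟩ ⟨hy1, hy2⟩
    refine ⟨fun n => ?_, fun n => ?_⟩
    · show ℓ ^ n • (x n + y n) = 0
      rw [smul_add, hx1 n, hy1 n, add_zero]
    · show ℓ • (x (n + 1) + y (n + 1)) = x n + y n
      rw [smul_add, hx2 n, hy2 n]
  neg_mem' := by
    rintro x ⟨hx1, hx2⟩
    refine ⟨fun n => ?_, fun n => ?_⟩
    · show ℓ ^ n • (-(x n)) = 0
      rw [smul_neg, hx1 n, neg_zero]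
    · show ℓ • (-(x (n + 1))) = -(x n)
      rw [smul_neg, hx2 n]

/-- The map induced on `ℓ`-adic Tate modules by a homomorphism of abelian groups,
acting componentwise. -/
def tateMap (ℓ : ℕ) {M N : Type*} [AddCommGroup M] [AddCommGroup N] (f : M →+ N)
    (x : tateSubgroup ℓ M) : tateSubgroup ℓ N :=
  ⟨fun n => f (x.1 n), by
    obtain ⟨h1, h2⟩ := x.2
    refine ⟨fun n => ?_, fun n => ?_⟩
    · show ℓ ^ n • f (x.1 n) = 0
      rw [← map_nsmul, h1 n, map_zero]
    · show ℓ • f (x.1 (n + 1)) = f (x.1 n)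
      rw [← map_nsmul, h2 n]⟩



/-- Dependent-choice chain construction. -/
lemma exists_chain {D : Type*} (Q : ℕ → D → Prop) (R : D → D → Prop) (d0 : D)
    (h0 : Q 0 d0) (hstep : ∀ n d, Q n d → ∃ d', Q (n + 1) d' ∧ R d d') :
    ∃ f : ℕ → D, f 0 = d0 ∧ (∀ n, Q n (f n)) ∧ ∀ n, R (f n) (f (n + 1)) := by
  let g : (n : ℕ) → {d : D // Q n d} := fun n =>
    Nat.rec ⟨d0, h0⟩ (fun n p => ⟨(hstep n p.1 p.2).choose, (hstep n p.1 p.2).choose_spec.1⟩) n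
  exact ⟨fun n => (g n).1, rfl, fun n => (g n).2,
    fun n => (hstep n (g n).1 (g n).2).choose_spec.2⟩

/-- Lemma 1.7: for a short exact sequence `0 → H → D → G → 0` of abelian groups with `D`
`ℓ`-divisible, the induced map `T_ℓ D → T_ℓ G` on `ℓ`-adic Tate modules is surjective if and
only if `H` is `ℓ`-divisible. -/
theorem tate_map_surjective_iff_ldivisible {H D G : Type*}
    [AddCommGroup H] [AddCommGroup D] [AddCommGroup G]
    (ℓ : ℕ) (hℓ : Nat.Prime ℓ) (ι : H →+ D) (π : D →+ G)
    (hι : Function.Injective ι) (hπ : Function.Surjective π)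
    (hex : ∀ d : D, π d = 0 ↔ ∃ h : H, ι h = d)
    (hD : ∀ x : D, ∃ y : D, ℓ • y = x) :
    Function.Surjective (tateMap ℓ π) ↔ ∀ x : H, ∃ y : H, ℓ • y = x := by
  constructor
  · intro hsurj x
    obtain ⟨e, he0, -, hechain⟩ := exists_chain (fun _ _ => True)
      (fun d d' => ℓ • d' = d) (ι x) trivial (fun n d _ => by
        obtain ⟨y, hy⟩ := hD d; exact ⟨y, trivial, hy⟩)
    have hepow : ∀ n, ℓ ^ n • e n = ι x := by
      intro n
      induction n with
      | zero => simpa using he0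
      | succ n ih =>
        rw [pow_succ, mul_smul, hechain n, ih]
    have hπιx : π (ι x) = 0 := (hex (ι x)).2 ⟨x, rfl⟩
    have hmem : (fun n => π (e n)) ∈ tateSubgroup ℓ G := by
      refine ⟨fun n => ?_, fun n => ?_⟩
      · show ℓ ^ n • π (e n) = 0
        rw [← map_nsmul, hepow n, hπιx]
      · show ℓ • π (e (n + 1)) = π (e n)
        rw [← map_nsmul, hechain n]
    obtain ⟨d, hd⟩ := hsurj ⟨fun n => π (e n), hmem⟩
    have hdn : ∀ n, π (d.1 n) = π (e n) := fun n =>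
      congrFun (congrArg Subtype.val hd) n
    have hd0 : d.1 0 = 0 := by
      have := d.2.1 0
      simpa using this
    have hker : π (e 1 - d.1 1) = 0 := by
      rw [map_sub, hdn 1, sub_self]
    obtain ⟨h1, hh1⟩ := (hex _).1 hker
    refine ⟨h1, hι ?_⟩
    rw [map_nsmul, hh1, smul_sub, hechain 0, d.2.2 0, hd0, he0, sub_zero]
  · intro hH x
    have hg0 : x.1 0 = 0 := by
      have := x.2.1 0
      simpa using this
    have key : ∀ n d, π d = x.1 n → ∃ d', π d' = x.1 (n + 1) ∧ ℓ • d' = d := by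
      intro n d hd
      obtain ⟨e, he⟩ := hπ (x.1 (n + 1))
      have : π (ℓ • e - d) = 0 := by
        rw [map_sub, map_nsmul, he, hd, x.2.2 n, sub_self]
      obtain ⟨h, hh⟩ := (hex _).1 this
      obtain ⟨h', hh'⟩ := hH h
      refine ⟨e - ι h', ?_, ?_⟩
      · rw [map_sub, he, (hex (ι h')).2 ⟨h', rfl⟩, sub_zero]
      · rw [smul_sub, ← map_nsmul, hh', hh]
        abel
    obtain ⟨f, hf0, hfQ, hfchain⟩ := exists_chain (fun n d => π d = x.1 n)
      (fun d d' => ℓ • d' = d) 0 (show π 0 = x.1 0 by rw [map_zero, hg0]) key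
    have hfmem : f ∈ tateSubgroup ℓ D := by
      refine ⟨fun n => ?_, hfchain⟩
      induction n with
      | zero => simpa using hf0
      | succ n ih =>
        rw [pow_succ, mul_smul, hfchain n, ih]
    refine ⟨⟨f, hfmem⟩, ?_⟩
    exact Subtype.ext (funext fun n => hfQ n)
end

section
/- Let 0 → H →ι D →π G → 0 be a short exact sequence of abelian groups with D ℓ-divisible, for a prime ℓ. Assume moreover that π maps the torsion subgroup D_tors of D onto the torsion subgroup G_tors of G. Then the induced map T_ℓπ : T_ℓD → T_ℓG on ℓ-adic Tate modules is surjective if and only if the torsion subgroup H_tors of H is ℓ-divisible. -/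
private lemma torsion_sub' {D : Type*} [AddCommGroup D] {a b : D} {m k : ℕ}
    (ha : m • a = 0) (hb : k • b = 0) : (m * k) • (a - b) = 0 := by
  have h1 : (m * k) • a = 0 := by rw [mul_comm, mul_smul, ha, smul_zero]
  have h2 : (m * k) • b = 0 := by rw [mul_smul, hb, smul_zero]
  rw [smul_sub, h1, h2, sub_zero]

private lemma dep_choice' {α : Type*} (P : ℕ → α → Prop) (Q : ℕ → α → α → Prop)
    (h0 : ∃ a, P 0 a) (step : ∀ n a, P n a → ∃ b, P (n + 1) b ∧ Q n a b) :
    ∃ f : ℕ → α, (∀ n, P n (f n)) ∧ ∀ n, Q n (f n) (f (n + 1)) := by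
  obtain ⟨a0, ha0⟩ := h0
  choose! g hg1 hg2 using step
  refine ⟨fun n => Nat.rec a0 (fun n x => g n x) n, ?_⟩
  have hP : ∀ n, P n (Nat.rec a0 (fun n x => g n x) n : α) := by
    intro n
    induction n with
    | zero => exact ha0
    | succ n ih => exact hg1 n _ ih
  exact ⟨hP, fun n => hg2 n _ (hP n)⟩

/-- Lemma 1.7 (torsion refinement): for a short exact sequence `0 → H → D → G → 0` of abelian
groups with `D` `ℓ`-divisible, such that `π` maps the torsion subgroup of `D` onto the torsion
subgroup of `G`, the induced map `T_ℓ D → T_ℓ G` is surjective if and only if the torsion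
subgroup of `H` is `ℓ`-divisible. -/
theorem tate_map_surjective_iff_torsion_ldivisible {H D G : Type*}
    [AddCommGroup H] [AddCommGroup D] [AddCommGroup G]
    (ℓ : ℕ) (hℓ : Nat.Prime ℓ) (ι : H →+ D) (π : D →+ G)
    (hι : Function.Injective ι) (hπ : Function.Surjective π)
    (hex : ∀ d : D, π d = 0 ↔ ∃ h : H, ι h = d)
    (hD : ∀ x : D, ∃ y : D, ℓ • y = x)
    (htors : ∀ g : G, (∃ n : ℕ, n ≠ 0 ∧ n • g = 0) →
      ∃ d : D, (∃ n : ℕ, n ≠ 0 ∧ n • d = 0) ∧ π d = g) :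
    Function.Surjective (tateMap ℓ π) ↔
      ∀ x : H, (∃ n : ℕ, n ≠ 0 ∧ n • x = 0) →
        ∃ y : H, (∃ n : ℕ, n ≠ 0 ∧ n • y = 0) ∧ ℓ • y = x := by
  have hℓ0 : ℓ ≠ 0 := hℓ.ne_zero
  constructor
  · rintro hsurj x ⟨m, hm, hmx⟩
    choose div hdiv using hD
    set e : ℕ → D := fun n => div^[n] (ι x) with he
    have he_succ : ∀ n, ℓ • e (n + 1) = e n := by
      intro n
      have h1 : e (n + 1) = div (e n) := Function.iterate_succ_apply' div n (ι x)
      rw [h1, hdiv]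
    have he_pow : ∀ n, ℓ ^ n • e n = ι x := by
      intro n
      induction n with
      | zero => simp [he]
      | succ n ih => rw [pow_succ, mul_smul, he_succ, ih]
    have hπιx : π (ι x) = 0 := (hex (ι x)).mpr ⟨x, rfl⟩
    have p1 : ∀ n, ℓ ^ n • π (e n) = 0 := by
      intro n
      rw [← map_nsmul, he_pow n, hπιx]
    have p2 : ∀ n, ℓ • π (e (n + 1)) = π (e n) := by
      intro n
      rw [← map_nsmul, he_succ n]
    obtain ⟨⟨f, hf1, hf2⟩, hfg⟩ := hsurj ⟨fun n => π (e n), p1, p2⟩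
    have hfeq : ∀ n, π (f n) = π (e n) := by
      intro n
      exact congrFun (congrArg Subtype.val hfg) n
    have hf0 : f 0 = 0 := by
      have := hf1 0
      simpa using this
    have hker : π (e 1 - f 1) = 0 := by
      rw [map_sub, hfeq 1, sub_self]
    obtain ⟨h, hh⟩ := (hex _).mp hker
    have hℓh : ℓ • h = x := by
      apply hι
      rw [map_nsmul, hh, smul_sub, he_succ 0, hf2 0, hf0, sub_zero]
      simp [he]
    refine ⟨h, ⟨(ℓ * m) * ℓ, by positivity, ?_⟩, hℓh⟩
    · apply hι
      rw [map_nsmul, map_zero, hh]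
      have ha : (ℓ * m) • e 1 = 0 := by
        rw [mul_comm, mul_smul, he_succ 0]
        show m • e 0 = 0
        have : e 0 = ι x := by simp [he]
        rw [this, ← map_nsmul, hmx, map_zero]
      have hb : ℓ • f 1 = 0 := by rw [hf2 0, hf0]
      exact torsion_sub' ha hb
  · rintro hdiv ⟨g, hg1, hg2⟩
    have h0 : ∃ a : D, π a = g 0 ∧ ℓ ^ 0 • a = 0 := by
      refine ⟨0, ?_, smul_zero _⟩
      have : g 0 = 0 := by simpa using hg1 0
      rw [map_zero, this]
    have hstep : ∀ (n : ℕ) (a : D), (π a = g n ∧ ℓ ^ n • a = 0) →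
        ∃ b : D, (π b = g (n + 1) ∧ ℓ ^ (n + 1) • b = 0) ∧ ℓ • b = a := by
      rintro n a ⟨hπa, hpa⟩
      obtain ⟨d, ⟨m, hm, hmd⟩, hπd⟩ := htors (g (n + 1))
        ⟨ℓ ^ (n + 1), pow_ne_zero _ hℓ0, hg1 (n + 1)⟩
      have hker : π (a - ℓ • d) = 0 := by
        rw [map_sub, map_nsmul, hπd, hπa, ← hg2 n, sub_self]
      obtain ⟨h, hh⟩ := (hex _).mp hker
      have hhtor : (ℓ ^ n * m) • h = 0 := by
        apply hι
        rw [map_nsmul, map_zero, hh]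
        have hb : m • (ℓ • d) = 0 := by
          rw [smul_comm, hmd, smul_zero]
        exact torsion_sub' hpa hb
      obtain ⟨y, ⟨k, hk, hky⟩, hℓy⟩ := hdiv h
        ⟨ℓ ^ n * m, mul_ne_zero (pow_ne_zero _ hℓ0) hm, hhtor⟩
      have hlink : ℓ • (d + ι y) = a := by
        rw [smul_add, ← map_nsmul, hℓy, hh]
        abel
      refine ⟨d + ι y, ⟨?_, ?_⟩, hlink⟩
      · rw [map_add, hπd, (hex (ι y)).mpr ⟨y, rfl⟩, add_zero]
      · rw [pow_succ, mul_smul, hlink, hpa]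
    obtain ⟨f, hP, hQ⟩ := dep_choice' (fun n d => π d = g n ∧ ℓ ^ n • d = 0)
      (fun _ a b => ℓ • b = a) h0 hstep
    exact ⟨⟨f, fun n => (hP n).2, hQ⟩, Subtype.ext (funext fun n => (hP n).1)⟩
end

section
/- Let φ : D → G be a surjective homomorphism of abelian groups such that D is divisible and φ maps the torsion subgroup D_tors onto the torsion subgroup G_tors. Then the following statements are equivalent: (1) ker φ is divisible; (2) the kernel of the restriction φ_tors : D_tors → G_tors is divisible; (3) for every prime ℓ, the induced map T_ℓφ : T_ℓD → T_ℓG is surjective. -/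
private lemma ker_div_of_prime_aux {D G : Type*} [AddCommGroup D] [AddCommGroup G] (φ : D →+ G)
    (h : ∀ ℓ : ℕ, ℓ.Prime → ∀ x : D, φ x = 0 → ∃ y : D, φ y = 0 ∧ ℓ • y = x) :
    ∀ x : D, φ x = 0 → ∀ n : ℤ, n ≠ 0 → ∃ y : D, φ y = 0 ∧ n • y = x := by
  have hnat : ∀ m : ℕ, m ≠ 0 → ∀ x : D, φ x = 0 → ∃ y : D, φ y = 0 ∧ m • y = x := by
    intro m
    induction m using Nat.strong_induction_on with
    | _ m ih =>
      intro hm x hx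
      rcases eq_or_ne m 1 with rfl | hm1
      · exact ⟨x, hx, one_smul _ _⟩
      · obtain ⟨p, hp, k, rfl⟩ := Nat.exists_prime_and_dvd hm1
        have hk : k ≠ 0 := by rintro rfl; simp at hm
        have hklt : k < p * k := by
          have h2 := hp.two_le
          have h3 := Nat.pos_of_ne_zero hk
          nlinarith
        obtain ⟨z, hz0, hz⟩ := h p hp x hx
        obtain ⟨y, hy0, hy⟩ := ih k hklt hk z hz0
        exact ⟨y, hy0, by rw [mul_smul, hy, hz]⟩
  intro x hx n hn
  obtain ⟨y, hy0, hy⟩ := hnat n.natAbs (Int.natAbs_ne_zero.mpr hn) x hx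
  rcases Int.natAbs_eq n with h' | h'
  · exact ⟨y, hy0, by rw [h', natCast_zsmul, hy]⟩
  · refine ⟨-y, by simp [hy0], ?_⟩
    rw [h', neg_zsmul, zsmul_neg, neg_neg, natCast_zsmul, hy]

/-- Corollary 1.6 (group-theoretic content): for a surjective homomorphism `φ : D → G` of
abelian groups with `D` divisible and `φ` surjective on torsion, the following are
equivalent: (1) `ker φ` is divisible; (2) `ker φ_tors` is divisible; (3) `T_ℓ φ` is
surjective for all primes `ℓ`. -/
theorem ker_divisible_tfae {D G : Type*} [AddCommGroup D] [AddCommGroup G]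
    (φ : D →+ G) (hφ : Function.Surjective φ)
    (hD : ∀ (x : D) (n : ℤ), n ≠ 0 → ∃ y : D, n • y = x)
    (htors : ∀ g : G, (∃ n : ℕ, n ≠ 0 ∧ n • g = 0) →
      ∃ d : D, (∃ n : ℕ, n ≠ 0 ∧ n • d = 0) ∧ φ d = g) :
    List.TFAE
      [ ∀ x : D, φ x = 0 → ∀ n : ℤ, n ≠ 0 → ∃ y : D, φ y = 0 ∧ n • y = x,
        ∀ x : D, (∃ m : ℕ, m ≠ 0 ∧ m • x = 0) → φ x = 0 → ∀ n : ℤ, n ≠ 0 →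
          ∃ y : D, (∃ m : ℕ, m ≠ 0 ∧ m • y = 0) ∧ φ y = 0 ∧ n • y = x,
        ∀ ℓ : ℕ, Nat.Prime ℓ → Function.Surjective (tateMap ℓ φ) ] := by
  tfae_have 1 → 2 := by
    intro h1 x hxt hx n hn
    obtain ⟨y, hy0, hyn⟩ := h1 x hx n hn
    obtain ⟨m, hm, hmx⟩ := hxt
    refine ⟨y, ⟨m * n.natAbs, Nat.mul_ne_zero hm (Int.natAbs_ne_zero.mpr hn), ?_⟩, hy0, hyn⟩
    have hna : n.natAbs • y = x ∨ n.natAbs • y = -x := by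
      rcases Int.natAbs_eq n with h' | h'
      · left; rw [← natCast_zsmul, ← h', hyn]
      · right
        rw [h', neg_zsmul] at hyn
        rw [← natCast_zsmul]
        exact neg_eq_iff_eq_neg.mp hyn
    rcases hna with h' | h' <;> rw [mul_smul, h'] <;> simp [smul_neg, hmx]
  tfae_have 2 → 3 := by
    intro h2 ℓ hℓ y
    have hy1 : ∀ n, ℓ ^ n • y.1 n = 0 := y.2.1
    have hy2 : ∀ n, ℓ • y.1 (n + 1) = y.1 n := y.2.2
    have hy0 : y.1 0 = 0 := by simpa using hy1 0
    have step : ∀ n (d : D), φ d = y.1 n → ℓ ^ n • d = 0 →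
        ∃ d' : D, φ d' = y.1 (n + 1) ∧ ℓ ^ (n + 1) • d' = 0 ∧ ℓ • d' = d := by
      intro n d hd hdt
      obtain ⟨e, ⟨m, hm, hme⟩, he⟩ :=
        htors (y.1 (n + 1)) ⟨ℓ ^ (n + 1), pow_ne_zero _ hℓ.ne_zero, hy1 (n + 1)⟩
      have hker : φ (ℓ • e - d) = 0 := by
        rw [map_sub, map_nsmul, he, hy2 n, hd, sub_self]
      have htor : ∃ m' : ℕ, m' ≠ 0 ∧ m' • (ℓ • e - d) = 0 := by
        refine ⟨m * ℓ ^ n, Nat.mul_ne_zero hm (pow_ne_zero _ hℓ.ne_zero), ?_⟩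
        have t1 : (m * ℓ ^ n) • (ℓ • e) = 0 := by
          rw [smul_smul]
          have hmm : m * ℓ ^ n * ℓ = ℓ ^ n * ℓ * m := by ring
          rw [hmm, mul_smul, hme, smul_zero]
        have t2 : (m * ℓ ^ n) • d = 0 := by rw [mul_smul, hdt, smul_zero]
        rw [smul_sub, t1, t2, sub_zero]
      obtain ⟨k, -, hk0, hkℓ⟩ :=
        h2 (ℓ • e - d) htor hker (ℓ : ℤ) (Int.natCast_ne_zero.mpr hℓ.ne_zero)
      rw [natCast_zsmul] at hkℓ
      refine ⟨e - k, ?_, ?_, ?_⟩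
      · rw [map_sub, he, hk0, sub_zero]
      · rw [pow_succ, mul_smul, smul_sub, hkℓ, sub_sub_cancel, hdt]
      · rw [smul_sub, hkℓ, sub_sub_cancel]
    choose F hF1 hF2 hF3 using step
    let f : ∀ n : ℕ, {d : D // φ d = y.1 n ∧ ℓ ^ n • d = 0} :=
      fun n => Nat.rec ⟨0, by simp [hy0], by simp⟩
        (fun n p => ⟨F n p.1 p.2.1 p.2.2, hF1 n p.1 p.2.1 p.2.2, hF2 n p.1 p.2.1 p.2.2⟩) n
    refine ⟨⟨fun n => (f n).1, fun n => (f n).2.2,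
        fun n => hF3 n (f n).1 (f n).2.1 (f n).2.2⟩, ?_⟩
    exact Subtype.ext (funext fun n => (f n).2.1)
  tfae_have 3 → 1 := by
    intro h3
    apply ker_div_of_prime_aux φ
    intro ℓ hℓ x hx
    have hℓz : (ℓ : ℤ) ≠ 0 := Int.natCast_ne_zero.mpr hℓ.ne_zero
    choose sec hsec using fun d : D => hD d (ℓ : ℤ) hℓz
    let f : ℕ → D := fun n => Nat.rec x (fun _ d => sec d) n
    have hf : ∀ n, ℓ • f (n + 1) = f n := by
      intro n
      have := hsec (f n)
      rwa [natCast_zsmul] at this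
    have hfn : ∀ n, ℓ ^ n • f n = x := by
      intro n
      induction n with
      | zero => simp [f]
      | succ n ih => rw [pow_succ, mul_smul, hf n, ih]
    have hg : (fun n => φ (f n)) ∈ tateSubgroup ℓ G := by
      refine ⟨fun n => ?_, fun n => ?_⟩
      · show ℓ ^ n • φ (f n) = 0
        rw [← map_nsmul, hfn n, hx]
      · show ℓ • φ (f (n + 1)) = φ (f n)
        rw [← map_nsmul, hf n]
    obtain ⟨d, hd⟩ := h3 ℓ hℓ ⟨_, hg⟩
    have hdn : ∀ n, φ (d.1 n) = φ (f n) := fun n => congrFun (congrArg Subtype.val hd) n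
    have hd0 : d.1 0 = 0 := by simpa using d.2.1 0
    refine ⟨f 1 - d.1 1, ?_, ?_⟩
    · rw [map_sub, hdn 1, sub_self]
    · have h1 : ℓ • f 1 = x := hf 0
      have hcompat : ℓ • d.1 1 = d.1 0 := d.2.2 0
      rw [smul_sub, h1, hcompat, hd0, sub_zero]
  tfae_finish
end

section
/- Let φ : D → G be a homomorphism of abelian groups such that D is divisible and φ maps the torsion subgroup D_tors onto the torsion subgroup G_tors. Let K = ker φ and let K_t = ker(φ_tors) = K ∩ D_tors be the kernel of the restriction of φ to torsion. Then for every nonzero integer N, the inclusion K_t ⊆ K induces an isomorphism K_t/(N·K_t) ≅ K/(N·K). -/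
/-- The subgroup `N·M = {N • y : y ∈ M}` of `N`-multiples in an abelian group `M`,
for an integer `N`. -/
def zsmulSub (N : ℤ) (M : Type*) [AddCommGroup M] : AddSubgroup M where
  carrier := {x | ∃ y : M, N • y = x}
  zero_mem' := ⟨0, smul_zero N⟩
  add_mem' := by
    rintro x y ⟨u, hu⟩ ⟨v, hv⟩
    exact ⟨u + v, by rw [smul_add, hu, hv]⟩
  neg_mem' := by
    rintro x ⟨u, hu⟩
    exact ⟨-u, by rw [smul_neg, hu]⟩

/-- The kernel of the restriction of `φ` to torsion, i.e. `ker φ ∩ D_tors`, as a subgroup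
of `D`. -/
def torsKer {D G : Type*} [AddCommGroup D] [AddCommGroup G] (φ : D →+ G) : AddSubgroup D where
  carrier := {x | φ x = 0 ∧ ∃ n : ℕ, n ≠ 0 ∧ n • x = 0}
  zero_mem' := ⟨map_zero φ, 1, one_ne_zero, smul_zero 1⟩
  add_mem' := by
    rintro x y ⟨hx0, n, hn, hnx⟩ ⟨hy0, m, hm, hmy⟩
    refine ⟨by rw [map_add, hx0, hy0, add_zero], n * m, mul_ne_zero hn hm, ?_⟩
    have hx : (n * m) • x = 0 := by rw [mul_comm, mul_smul, hnx, smul_zero]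
    have hy : (n * m) • y = 0 := by rw [mul_smul, hmy, smul_zero]
    rw [smul_add, hx, hy, add_zero]
  neg_mem' := by
    rintro x ⟨hx0, n, hn, hnx⟩
    exact ⟨by rw [map_neg, hx0, neg_zero], n, hn, by rw [smul_neg, hnx, neg_zero]⟩

/-
Divisibility of `D` makes every `x ∈ ker φ` an `N`-th multiple `N • y`; then `φ y` is torsion, so
it lifts to a torsion `d`, and `x = N • d + N • (y - d)` with `N • d ∈ K_t` and `y - d ∈ K`: the map
`K_t/N → K/N` is onto. It is injective because `x = N • k` with `x` torsion forces `k` torsion.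
-/

section zsmulSub

variable {M M' : Type*} [AddCommGroup M] [AddCommGroup M'] (N : ℤ)

theorem zsmulSub_le_comap (f : M →+ M') : zsmulSub N M ≤ (zsmulSub N M').comap f := by
  rintro _ ⟨y, rfl⟩
  exact ⟨f y, (map_zsmul f N y).symm⟩

abbrev zsmulSubMap (f : M →+ M') : M ⧸ zsmulSub N M →+ M' ⧸ zsmulSub N M' :=
  QuotientAddGroup.map _ _ f (zsmulSub_le_comap N f)

variable {N}

theorem zsmulSubMap_injective {f : M →+ M'} (hf : ∀ m y, f m = N • y → ∃ z, N • z = m) :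
    Function.Injective (zsmulSubMap N f) := by
  rw [injective_iff_map_eq_zero]
  rintro ⟨m⟩ h
  obtain ⟨y, hy⟩ := (QuotientAddGroup.eq_zero_iff (f m)).mp h
  exact (QuotientAddGroup.eq_zero_iff m).mpr (hf m y hy.symm)

theorem zsmulSubMap_surjective {f : M →+ M'} (hf : ∀ y, ∃ m z, f m + N • z = y) :
    Function.Surjective (zsmulSubMap N f) := by
  intro y
  induction y using QuotientAddGroup.induction_on with | H y => ?_
  obtain ⟨m, z, rfl⟩ := hf y
  refine ⟨QuotientAddGroup.mk m, ?_⟩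
  have hz : (QuotientAddGroup.mk (N • z) : M' ⧸ zsmulSub N M') = 0 :=
    (QuotientAddGroup.eq_zero_iff _).mpr ⟨z, rfl⟩
  rw [QuotientAddGroup.mk_add, hz, add_zero]
  rfl

end zsmulSub

theorem isOfFinAddOrder_iff_exists_nsmul_ne_zero {M : Type*} [AddMonoid M] {x : M} :
    IsOfFinAddOrder x ↔ ∃ n : ℕ, n ≠ 0 ∧ n • x = 0 := by
  simp only [isOfFinAddOrder_iff_nsmul_eq_zero, Nat.pos_iff_ne_zero]

theorem IsOfFinAddOrder.of_zsmul {M : Type*} [AddCommGroup M] {x : M} {N : ℤ}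
    (h : IsOfFinAddOrder (N • x)) (hN : N ≠ 0) : IsOfFinAddOrder x := by
  obtain ⟨m, hm, hmx⟩ := isOfFinAddOrder_iff_zsmul_eq_zero.mp h
  exact isOfFinAddOrder_iff_zsmul_eq_zero.mpr ⟨m * N, mul_ne_zero hm hN, by rw [mul_smul, hmx]⟩

section torsKer

variable {D G : Type*} [AddCommGroup D] [AddCommGroup G] {φ : D →+ G}

theorem mem_torsKer_iff {x : D} : x ∈ torsKer φ ↔ φ x = 0 ∧ IsOfFinAddOrder x := by
  rw [isOfFinAddOrder_iff_exists_nsmul_ne_zero]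
  rfl

theorem torsKer_le_ker : torsKer φ ≤ φ.ker := fun _ hx => (mem_torsKer_iff.mp hx).1

theorem mem_torsKer_of_zsmul_mem {N : ℤ} (hN : N ≠ 0) {k : D} (hk : k ∈ φ.ker)
    (hNk : N • k ∈ torsKer φ) : k ∈ torsKer φ :=
  mem_torsKer_iff.mpr ⟨hk, (mem_torsKer_iff.mp hNk).2.of_zsmul hN⟩

theorem exists_mem_torsKer_add_zsmul_eq (hD : ∀ (x : D) (n : ℤ), n ≠ 0 → ∃ y : D, n • y = x)
    (htors : ∀ g : G, IsOfFinAddOrder g → ∃ d : D, IsOfFinAddOrder d ∧ φ d = g)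
    {N : ℤ} (hN : N ≠ 0) {x : D} (hx : x ∈ φ.ker) :
    ∃ t ∈ torsKer φ, ∃ k ∈ φ.ker, t + N • k = x := by
  obtain ⟨y, rfl⟩ := hD x N hN
  have hNy : N • φ y = 0 := by rw [← map_zsmul]; exact hx
  obtain ⟨d, hd, hφd⟩ := htors (φ y) (isOfFinAddOrder_iff_zsmul_eq_zero.mpr ⟨N, hN, hNy⟩)
  refine ⟨N • d, mem_torsKer_iff.mpr ⟨by rw [map_zsmul, hφd, hNy], hd.zsmul⟩, y - d, ?_, ?_⟩
  · rw [AddMonoidHom.mem_ker, map_sub, hφd, sub_self]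
  · rw [smul_sub, add_sub_cancel]

end torsKer

/-- Remark 1.8: if `φ : D → G` is a homomorphism of abelian groups with `D` divisible and `φ`
surjective on torsion, then for any nonzero integer `N` the inclusion
`ker(φ_tors) ⊆ ker φ` induces an isomorphism `ker(φ_tors)/N ≅ ker(φ)/N`. -/
theorem torsion_kernel_mod_N {D G : Type*} [AddCommGroup D] [AddCommGroup G]
    (φ : D →+ G)
    (hD : ∀ (x : D) (n : ℤ), n ≠ 0 → ∃ y : D, n • y = x)
    (htors : ∀ g : G, (∃ n : ℕ, n ≠ 0 ∧ n • g = 0) →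
      ∃ d : D, (∃ n : ℕ, n ≠ 0 ∧ n • d = 0) ∧ φ d = g)
    (N : ℤ) (hN : N ≠ 0) :
    ∃ e : (torsKer φ ⧸ zsmulSub N (torsKer φ)) ≃+ (φ.ker ⧸ zsmulSub N φ.ker),
      ∀ x : torsKer φ, e (QuotientAddGroup.mk x) =
        QuotientAddGroup.mk (⟨(x : D), AddMonoidHom.mem_ker.mpr x.2.1⟩ : φ.ker) := by
  let ι := AddSubgroup.inclusion (torsKer_le_ker (φ := φ))
  have hinj : Function.Injective (zsmulSubMap N ι) := by
    refine zsmulSubMap_injective fun x k hxk => ?_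
    have hNk : N • (k : D) = x := congrArg Subtype.val hxk.symm
    have hk : (k : D) ∈ torsKer φ := mem_torsKer_of_zsmul_mem hN k.2 (hNk ▸ x.2)
    exact ⟨⟨k, hk⟩, Subtype.ext hNk⟩
  have hsurj : Function.Surjective (zsmulSubMap N ι) := by
    refine zsmulSubMap_surjective fun x => ?_
    have htors' : ∀ g : G, IsOfFinAddOrder g → ∃ d : D, IsOfFinAddOrder d ∧ φ d = g := by
      simpa only [← isOfFinAddOrder_iff_exists_nsmul_ne_zero] using htors
    obtain ⟨t, ht, k, hk, htk⟩ := exists_mem_torsKer_add_zsmul_eq hD htors' hN x.2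
    exact ⟨⟨t, ht⟩, ⟨k, hk⟩, Subtype.ext htk⟩
  exact ⟨AddEquiv.ofBijective _ ⟨hinj, hsurj⟩, fun _ => rfl⟩
end
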